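/- arXiv:1611.07455 — 2 statements merged into one kernel-verified Lean document; each statement's English description precedes it below -/
import Mathlib

section
/- Let {p_k, ρ^k_ABC}_{k=1}^K be an ensemble of states on H_A ⊗ H_B ⊗ H_C with T^(a)(ρ^k_ABC) = 0 for every k. If the marginal states {ρ_B^k}_k are mutually orthogonal and the marginal states {ρ_C^k}_k are mutually orthogonal, then the state ρ_ABC = ∑_{k=1}^K p_k ρ^k_ABC satisfies T^(a)(ρ_ABC) = 0. -/
open Matrix Kronecker
open scoped Classical ComplexOrder

noncomputable section

/-- A state (density operator): positive semidefinite with unit trace. -/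
def IsState {n : Type*} [Fintype n] (ρ : Matrix n n ℂ) : Prop :=
  ρ.PosSemidef ∧ ρ.trace = 1

/-- A unit vector. -/
def UnitVec {n : Type*} [Fintype n] (ψ : n → ℂ) : Prop :=
  ∑ i, Complex.normSq (ψ i) = 1

/-- The rank-one projection `|ψ⟩⟨ψ|`. -/
def pureSt {n : Type*} (ψ : n → ℂ) : Matrix n n ℂ :=
  Matrix.vecMulVec ψ (star ψ)

/-- Von Neumann entropy `S(ρ) = -Tr(ρ log ρ)`, computed via the eigenvalues of a
Hermitian matrix (with the convention `0 log 0 = 0`, and junk value `0` on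
non-Hermitian input). -/
def entropy {n : Type*} [Fintype n] [DecidableEq n] (ρ : Matrix n n ℂ) : ℝ :=
  if h : ρ.IsHermitian then -∑ i, h.eigenvalues i * Real.log (h.eigenvalues i) else 0

/-- Partial trace over the second tensor factor. -/
def ptraceRight {X Y : Type*} [Fintype Y] (ρ : Matrix (X × Y) (X × Y) ℂ) :
    Matrix X X ℂ :=
  fun x x' => ∑ y, ρ (x, y) (x', y)

/-- Partial trace over the first tensor factor. -/
def ptraceLeft {X Y : Type*} [Fintype X] (ρ : Matrix (X × Y) (X × Y) ℂ) :
    Matrix Y Y ℂ :=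
  fun y y' => ∑ x, ρ (x, y) (x, y')

/-- Marginal `ρ_AB` of a tripartite state. -/
def margAB {A B C : Type*} [Fintype C] (ρ : Matrix (A × B × C) (A × B × C) ℂ) :
    Matrix (A × B) (A × B) ℂ :=
  fun x y => ∑ c, ρ (x.1, x.2, c) (y.1, y.2, c)

/-- Marginal `ρ_AC` of a tripartite state. -/
def margAC {A B C : Type*} [Fintype B] (ρ : Matrix (A × B × C) (A × B × C) ℂ) :
    Matrix (A × C) (A × C) ℂ :=
  fun x y => ∑ b, ρ (x.1, b, x.2) (y.1, b, y.2)

/-- Marginal `ρ_BC` of a tripartite state. -/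
def margBC {A B C : Type*} [Fintype A] (ρ : Matrix (A × B × C) (A × B × C) ℂ) :
    Matrix (B × C) (B × C) ℂ :=
  fun x y => ∑ a, ρ (a, x.1, x.2) (a, y.1, y.2)

/-- Marginal `ρ_A` of a tripartite state. -/
def margA {A B C : Type*} [Fintype B] [Fintype C]
    (ρ : Matrix (A × B × C) (A × B × C) ℂ) : Matrix A A ℂ :=
  fun a a' => ∑ b, ∑ c, ρ (a, b, c) (a', b, c)

/-- Marginal `ρ_B` of a tripartite state. -/
def margB {A B C : Type*} [Fintype A] [Fintype C]
    (ρ : Matrix (A × B × C) (A × B × C) ℂ) : Matrix B B ℂ :=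
  fun b b' => ∑ a, ∑ c, ρ (a, b, c) (a, b', c)

/-- Marginal `ρ_C` of a tripartite state. -/
def margC {A B C : Type*} [Fintype A] [Fintype B]
    (ρ : Matrix (A × B × C) (A × B × C) ℂ) : Matrix C C ℂ :=
  fun c c' => ∑ a, ∑ b, ρ (a, b, c) (a, b, c')

/-- `T^(a)(ρ_ABC) = S(ρ_AB) + S(ρ_AC) − S(ρ_B) − S(ρ_C)`, the deviation from
saturation of strong subadditivity. -/
def Ta {A B C : Type*} [Fintype A] [Fintype B] [Fintype C]
    [DecidableEq A] [DecidableEq B] [DecidableEq C]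
    (ρ : Matrix (A × B × C) (A × B × C) ℂ) : ℝ :=
  entropy (margAB ρ) + entropy (margAC ρ) - entropy (margB ρ) - entropy (margC ρ)

/-- Entanglement of formation of a bipartite state (infimum over pure-state
ensembles realizing `ρ`). -/
def eof {X Y : Type*} [Fintype X] [Fintype Y] [DecidableEq X]
    (ρ : Matrix (X × Y) (X × Y) ℂ) : ℝ :=
  sInf { e : ℝ | ∃ (K : ℕ) (p : Fin K → ℝ) (ψ : Fin K → X × Y → ℂ),
    (∀ i, 0 ≤ p i) ∧ (∀ i, UnitVec (ψ i)) ∧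
    ρ = ∑ i, p i • pureSt (ψ i) ∧
    e = ∑ i, p i * entropy (ptraceRight (pureSt (ψ i))) }

/-- Probability of obtaining the outcome of the rank-one projector `|u⟩⟨u|`
measured on the second subsystem. -/
def measProb {X Y : Type*} [Fintype X] [Fintype Y] [DecidableEq X]
    (ρ : Matrix (X × Y) (X × Y) ℂ) (u : Y → ℂ) : ℝ :=
  ((((1 : Matrix X X ℂ) ⊗ₖ pureSt u) * ρ).trace).re

/-- Post-measurement state of the first subsystem after obtaining the outcome
of the rank-one projector `|u⟩⟨u|` on the second subsystem. -/
def postState {X Y : Type*} [Fintype X] [Fintype Y] [DecidableEq X]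
    (ρ : Matrix (X × Y) (X × Y) ℂ) (u : Y → ℂ) : Matrix X X ℂ :=
  (measProb ρ u)⁻¹ •
    ptraceRight (((1 : Matrix X X ℂ) ⊗ₖ pureSt u) * ρ * ((1 : Matrix X X ℂ) ⊗ₖ pureSt u))

/-- Classical correlation `J^(Y)(ρ_XY)`: supremum over complete families of
mutually orthogonal rank-one projectors on `H_Y` (parametrized by orthonormal
bases `v` of `H_Y`) of `S(ρ_X) − ∑ᵢ pᵢ S(ρ_{X|i})`. -/
def classicalCorr {X Y : Type*} [Fintype X] [Fintype Y] [DecidableEq X] [DecidableEq Y]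
    (ρ : Matrix (X × Y) (X × Y) ℂ) : ℝ :=
  sSup { r : ℝ | ∃ v : Y → Y → ℂ,
    (∀ i j, star (v i) ⬝ᵥ v j = if i = j then 1 else 0) ∧
    r = entropy (ptraceRight ρ) - ∑ i, measProb ρ (v i) * entropy (postState ρ (v i)) }

/-- Quantum mutual information `I(ρ_XY) = S(ρ_X) + S(ρ_Y) − S(ρ_XY)`. -/
def mutualInfo {X Y : Type*} [Fintype X] [Fintype Y] [DecidableEq X] [DecidableEq Y]
    (ρ : Matrix (X × Y) (X × Y) ℂ) : ℝ :=
  entropy (ptraceRight ρ) + entropy (ptraceLeft ρ) - entropy ρ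

/-- Quantum discord `D^(Y)(ρ_XY)` with measurement on the second subsystem. -/
def discord {X Y : Type*} [Fintype X] [Fintype Y] [DecidableEq X] [DecidableEq Y]
    (ρ : Matrix (X × Y) (X × Y) ℂ) : ℝ :=
  mutualInfo ρ - classicalCorr ρ

/-- Quantum conditional entropy `S(X|Y) = S(ρ_XY) − S(ρ_Y)`. -/
def condEnt {X Y : Type*} [Fintype X] [Fintype Y] [DecidableEq X] [DecidableEq Y]
    (ρ : Matrix (X × Y) (X × Y) ℂ) : ℝ :=
  entropy ρ - entropy (ptraceLeft ρ)

/-- Marginal `ρ_{AB̃}` (`B̃ = BE`) of a four-partite state on `A × B × C × E`. -/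
def margABE {A B C E : Type*} [Fintype C]
    (Ψ : Matrix (A × B × C × E) (A × B × C × E) ℂ) :
    Matrix (A × B × E) (A × B × E) ℂ :=
  fun x y => ∑ c, Ψ (x.1, x.2.1, c, x.2.2) (y.1, y.2.1, c, y.2.2)

/-- Marginal `ρ_{AC̃}` (`C̃ = CE`) of a four-partite state on `A × B × C × E`. -/
def margACE {A B C E : Type*} [Fintype B]
    (Ψ : Matrix (A × B × C × E) (A × B × C × E) ℂ) :
    Matrix (A × C × E) (A × C × E) ℂ :=
  fun x y => ∑ b, Ψ (x.1, b, x.2.1, x.2.2) (y.1, b, y.2.1, y.2.2)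

/-- Marginal `ρ_ABC` of a four-partite state on `A × B × C × E` (trace out `E`). -/
def margABC {A B C E : Type*} [Fintype E]
    (Ψ : Matrix (A × B × C × E) (A × B × C × E) ℂ) :
    Matrix (A × B × C) (A × B × C) ℂ :=
  fun x y => ∑ e, Ψ (x.1, x.2.1, x.2.2, e) (y.1, y.2.1, y.2.2, e)

/-- Reordering `(A ⊗ (B^L ⊗ C^L)) ⊗ (B^R ⊗ C^R) ≃ A ⊗ (B^L ⊗ B^R) ⊗ (C^L ⊗ C^R)`. -/
def reindexYZ (A BL BR CL CR : Type*) :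
    (A × (BL × CL)) × (BR × CR) ≃ A × (BL × BR) × (CL × CR) where
  toFun x := (x.1.1, (x.1.2.1, x.2.1), (x.1.2.2, x.2.2))
  invFun x := ((x.1, (x.2.1.1, x.2.2.1)), (x.2.1.2, x.2.2.2))
  left_inv := by rintro ⟨⟨a, bl, cl⟩, br, cr⟩; rfl
  right_inv := by rintro ⟨a, ⟨bl, br⟩, cl, cr⟩; rfl

/-!
Orthogonality of the `B`-marginals lifts to orthogonality of the `AB`-marginals: writing
`σ = Sᴴ S` and `τ = Tᴴ T`, the relation `Tr_A σ · Tr_A τ = 0` forces `S Tᴴ = 0`, hence `σ τ = 0`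
(likewise for `C` and `AC`). For mutually orthogonal Hermitian matrices the functional calculus of
a function vanishing at `0` is additive, since on the finite joint spectrum such a function is a
polynomial without constant term. Hence the entropy of an orthogonal mixture is
`S(∑ pₖ σₖ) = ∑ (pₖ S(σₖ) + η(pₖ) Tr σₖ)` with `η = Real.negMulLog`. Applied to the four marginals in `T^(a)`, the
`η(pₖ)`-terms cancel because partial traces preserve the trace, and `T^(a)(∑ pₖ ρᵏ) = ∑ pₖ T^(a)(ρᵏ)`.
-/

section OrthogonalPowers

variable {R : Type*} [Ring R] {a b : R}

lemma add_pow_succ_of_mul_eq_zero (hab : a * b = 0) (hba : b * a = 0) (m : ℕ) :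
    (a + b) ^ (m + 1) = a ^ (m + 1) + b ^ (m + 1) := by
  induction m with
  | zero => simp
  | succ m ih =>
    have hab' : a ^ (m + 1) * b = 0 := by rw [pow_succ, mul_assoc, hab, mul_zero]
    have hba' : b ^ (m + 1) * a = 0 := by rw [pow_succ, mul_assoc, hba, mul_zero]
    rw [pow_succ, ih, add_mul, mul_add, mul_add, hab', hba', add_zero, zero_add, ← pow_succ,
      ← pow_succ]

lemma Polynomial.aeval_add_of_mul_eq_zero {S : Type*} [CommRing S] [Algebra S R]
    (hab : a * b = 0) (hba : b * a = 0) {P : Polynomial S} (hP : P.coeff 0 = 0) :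
    Polynomial.aeval (a + b) P = Polynomial.aeval a P + Polynomial.aeval b P := by
  simp only [Polynomial.aeval_eq_sum_range, ← Finset.sum_add_distrib]
  refine Finset.sum_congr rfl fun m _ => ?_
  cases m with
  | zero => simp [hP]
  | succ m => rw [add_pow_succ_of_mul_eq_zero hab hba, smul_add]

end OrthogonalPowers

namespace Matrix.IsHermitian

variable {n 𝕜 : Type*} [Fintype n] [DecidableEq n] [RCLike 𝕜] {A : Matrix n n 𝕜}

lemma trace_cfc (hA : A.IsHermitian) (f : ℝ → ℝ) :
    (cfc f A).trace = ∑ i, ((f (hA.eigenvalues i) : ℝ) : 𝕜) := by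
  rw [hA.cfc_eq, IsHermitian.cfc, Unitary.conjStarAlgAut_apply, trace_mul_cycle,
    Unitary.coe_star_mul_self, one_mul, trace_diagonal]
  rfl

open Polynomial in
lemma cfc_add_of_mul_eq_zero {B : Matrix n n 𝕜} (hA : A.IsHermitian) (hB : B.IsHermitian)
    (hAB : A * B = 0) {f : ℝ → ℝ} (hf : f 0 = 0) : cfc f (A + B) = cfc f A + cfc f B := by
  have hBA : B * A = 0 := by
    simpa only [conjTranspose_mul, hA.eq, hB.eq, conjTranspose_zero] using congrArg (·ᴴ) hAB
  -- On the finitely many points of the three spectra, `f` agrees with a polynomial `P`.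
  let s : Finset ℝ := insert 0 ((A.finite_real_spectrum.union B.finite_real_spectrum).union
    (A + B).finite_real_spectrum).toFinset
  let P : ℝ[X] := Lagrange.interpolate s id f
  have hP : ∀ x ∈ s, P.eval x = f x := fun x hx =>
    Lagrange.eval_interpolate_at_node f (Set.injOn_id _) hx
  have hcfc : ∀ M : Matrix n n 𝕜, M.IsHermitian → spectrum ℝ M ⊆ s → cfc f M = aeval M P :=
    fun M hM hMs => by
      rw [← cfc_polynomial P M hM]
      exact cfc_congr fun x hx => (hP x (hMs hx)).symm
  have hPzero : P.coeff 0 = 0 := by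
    rw [coeff_zero_eq_eval_zero, hP 0 (Finset.mem_insert_self _ _), hf]
  rw [hcfc A hA (fun x hx => by simp [s, hx]), hcfc B hB (fun x hx => by simp [s, hx]),
    hcfc (A + B) (hA.add hB) (fun x hx => by simp [s, hx]),
    aeval_add_of_mul_eq_zero hAB hBA hPzero]

end Matrix.IsHermitian

section Entropy

variable {n : Type*} [Fintype n] [DecidableEq n]

lemma entropy_eq_re_trace_cfc {A : Matrix n n ℂ} (hA : A.IsHermitian) :
    entropy A = (cfc Real.negMulLog A).trace.re := by
  simp [entropy, hA, hA.trace_cfc, Real.negMulLog]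

lemma entropy_zero : entropy (0 : Matrix n n ℂ) = 0 := by
  simp [entropy_eq_re_trace_cfc isHermitian_zero]

lemma entropy_add_of_mul_eq_zero {A B : Matrix n n ℂ} (hA : A.IsHermitian) (hB : B.IsHermitian)
    (hAB : A * B = 0) : entropy (A + B) = entropy A + entropy B := by
  rw [entropy_eq_re_trace_cfc (hA.add hB), entropy_eq_re_trace_cfc hA,
    entropy_eq_re_trace_cfc hB, hA.cfc_add_of_mul_eq_zero hB hAB Real.negMulLog_zero, trace_add,
    Complex.add_re]

lemma entropy_smul {A : Matrix n n ℂ} (hA : A.IsHermitian) (p : ℝ) :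
    entropy (p • A) = p * entropy A + Real.negMulLog p * A.trace.re := by
  have hcfc : cfc Real.negMulLog (p • A) = p • cfc Real.negMulLog A + Real.negMulLog p • A := by
    have hcont := Real.continuous_negMulLog
    rw [show cfc Real.negMulLog (p • A) = cfc (fun x => Real.negMulLog (p * x)) A from
      (cfc_comp_const_mul p _ A hcont.continuousOn hA).symm]
    simp only [Real.negMulLog_mul, mul_comm _ (Real.negMulLog p)]
    rw [cfc_add A (Real.negMulLog p * ·) (fun x => p * Real.negMulLog x) (by fun_prop)
        (hcont.const_smul p).continuousOn,
      cfc_const_mul _ _ A hcont.continuousOn, add_comm]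
    exact congrArg _ (cfc_const_mul_id _ A hA)
  rw [entropy_eq_re_trace_cfc (hA.smul (IsSelfAdjoint.all p)), hcfc, trace_add, trace_smul,
    trace_smul, Complex.add_re, Complex.real_smul, Complex.real_smul, Complex.mul_re,
    Complex.mul_re, entropy_eq_re_trace_cfc hA]
  simp

lemma entropy_sum_of_pairwise_mul_eq_zero {ι : Type*} {σ : ι → Matrix n n ℂ}
    (hσ : ∀ k, (σ k).IsHermitian) (horth : Pairwise fun k k' => σ k * σ k' = 0) (s : Finset ι) :
    entropy (∑ k ∈ s, σ k) = ∑ k ∈ s, entropy (σ k) := by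
  classical
  induction s using Finset.induction_on with
  | empty => simp [entropy_zero]
  | insert j s hj ih =>
    have horth_j : σ j * ∑ k ∈ s, σ k = 0 := by
      rw [Finset.mul_sum]
      exact Finset.sum_eq_zero fun k hk => horth (ne_of_mem_of_not_mem hk hj).symm
    rw [Finset.sum_insert hj, Finset.sum_insert hj, entropy_add_of_mul_eq_zero (hσ j)
      (isSelfAdjoint_sum s fun k _ => hσ k) horth_j, ih]

lemma entropy_sum_smul_of_pairwise_mul_eq_zero {ι : Type*} [Fintype ι] {σ : ι → Matrix n n ℂ}
    (hσ : ∀ k, (σ k).IsHermitian) (horth : Pairwise fun k k' => σ k * σ k' = 0) (p : ι → ℝ) :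
    entropy (∑ k, p k • σ k)
      = ∑ k, (p k * entropy (σ k) + Real.negMulLog (p k) * (σ k).trace.re) := by
  rw [entropy_sum_of_pairwise_mul_eq_zero (fun k => (hσ k).smul (IsSelfAdjoint.all (p k)))
    (fun k k' hkk' => by simp only [smul_mul_smul_comm, horth hkk', smul_zero])]
  exact Finset.sum_congr rfl fun k _ => entropy_smul (hσ k) (p k)

end Entropy

section PartialTrace

variable {X Y : Type*} [Fintype X]

lemma ptraceLeft_eq_sum_submatrix (σ : Matrix (X × Y) (X × Y) ℂ) :
    ptraceLeft σ = ∑ x, σ.submatrix (Prod.mk x) (Prod.mk x) := by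
  ext y y'
  simp [ptraceLeft, Matrix.sum_apply]

lemma posSemidef_ptraceLeft {σ : Matrix (X × Y) (X × Y) ℂ} (hσ : σ.PosSemidef) :
    (ptraceLeft σ).PosSemidef := by
  rw [ptraceLeft_eq_sum_submatrix]
  exact posSemidef_sum _ fun x _ => hσ.submatrix _

lemma trace_ptraceLeft [Fintype Y] (σ : Matrix (X × Y) (X × Y) ℂ) :
    (ptraceLeft σ).trace = σ.trace := by
  simp only [trace, diag, ptraceLeft, Fintype.sum_prod_type]
  exact Finset.sum_comm

/-- The blocks `S(·, (x, ·))` of `S`, stacked on top of each other. -/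
def stackBlocks {m : Type*} (S : Matrix m (X × Y) ℂ) : Matrix (X × m) Y ℂ :=
  Matrix.of fun p y => S p.2 (p.1, y)

lemma ptraceLeft_conjTranspose_mul_self {m : Type*} [Fintype m] (S : Matrix m (X × Y) ℂ) :
    ptraceLeft (Sᴴ * S) = (stackBlocks S)ᴴ * stackBlocks S := by
  ext y y'
  simp [ptraceLeft, stackBlocks, mul_apply, Fintype.sum_prod_type]

lemma mul_conjTranspose_apply_eq_sum [Fintype Y] {m m' : Type*} (S : Matrix m (X × Y) ℂ)
    (T : Matrix m' (X × Y) ℂ) (r : m) (r' : m') :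
    (S * Tᴴ) r r' = ∑ x, (stackBlocks S * (stackBlocks T)ᴴ) (x, r) (x, r') := by
  simp [stackBlocks, mul_apply, Fintype.sum_prod_type]

lemma mul_conjTranspose_eq_zero_of_ptraceLeft_mul_eq_zero [Fintype Y] {m m' : Type*}
    [Fintype m] [Fintype m'] {S : Matrix m (X × Y) ℂ} {T : Matrix m' (X × Y) ℂ}
    (h : ptraceLeft (Sᴴ * S) * ptraceLeft (Tᴴ * T) = 0) : S * Tᴴ = 0 := by
  rw [ptraceLeft_conjTranspose_mul_self, ptraceLeft_conjTranspose_mul_self,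
    conjTranspose_mul_self_mul_eq_zero, mul_conjTranspose_mul_self_eq_zero] at h
  ext r r'
  simp [mul_conjTranspose_apply_eq_sum, h]

open MatrixOrder in
lemma Matrix.PosSemidef.mul_eq_zero_of_ptraceLeft_mul_eq_zero [Fintype Y]
    {σ τ : Matrix (X × Y) (X × Y) ℂ} (hσ : σ.PosSemidef) (hτ : τ.PosSemidef)
    (h : ptraceLeft σ * ptraceLeft τ = 0) : σ * τ = 0 := by
  obtain ⟨S, rfl⟩ := CStarAlgebra.nonneg_iff_eq_star_mul_self.mp hσ.nonneg
  obtain ⟨T, rfl⟩ := CStarAlgebra.nonneg_iff_eq_star_mul_self.mp hτ.nonneg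
  rw [star_eq_conjTranspose, star_eq_conjTranspose] at h ⊢
  rw [Matrix.mul_assoc, ← Matrix.mul_assoc S,
    mul_conjTranspose_eq_zero_of_ptraceLeft_mul_eq_zero h, Matrix.zero_mul, Matrix.mul_zero]

end PartialTrace

lemma ptraceLeft_sum_smul {X Y ι : Type*} [Fintype X] [Fintype ι] (p : ι → ℝ)
    (σ : ι → Matrix (X × Y) (X × Y) ℂ) :
    ptraceLeft (∑ k, p k • σ k) = ∑ k, p k • ptraceLeft (σ k) := by
  ext y y'
  simp only [ptraceLeft, Matrix.sum_apply, Matrix.smul_apply, Finset.smul_sum]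
  exact Finset.sum_comm

section Marginals

variable {A B C : Type*}

lemma margB_eq_ptraceLeft_margAB [Fintype A] [Fintype C]
    (ρ : Matrix (A × B × C) (A × B × C) ℂ) :
    margB ρ = ptraceLeft (margAB ρ) := rfl

lemma margC_eq_ptraceLeft_margAC [Fintype A] [Fintype B]
    (ρ : Matrix (A × B × C) (A × B × C) ℂ) :
    margC ρ = ptraceLeft (margAC ρ) := rfl

lemma posSemidef_margAB [Fintype C] {ρ : Matrix (A × B × C) (A × B × C) ℂ}
    (hρ : ρ.PosSemidef) : (margAB ρ).PosSemidef := by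
  have : margAB ρ = ∑ c, ρ.submatrix (fun x => (x.1, x.2, c)) (fun x => (x.1, x.2, c)) := by
    ext x y
    simp [margAB, Matrix.sum_apply]
  rw [this]
  exact posSemidef_sum _ fun c _ => hρ.submatrix _

lemma posSemidef_margAC [Fintype B] {ρ : Matrix (A × B × C) (A × B × C) ℂ}
    (hρ : ρ.PosSemidef) : (margAC ρ).PosSemidef := by
  have : margAC ρ = ∑ b, ρ.submatrix (fun x => (x.1, b, x.2)) (fun x => (x.1, b, x.2)) := by
    ext x y
    simp [margAC, Matrix.sum_apply]
  rw [this]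
  exact posSemidef_sum _ fun b _ => hρ.submatrix _

lemma margAB_sum_smul [Fintype C] {ι : Type*} [Fintype ι] (p : ι → ℝ)
    (ρ : ι → Matrix (A × B × C) (A × B × C) ℂ) :
    margAB (∑ k, p k • ρ k) = ∑ k, p k • margAB (ρ k) := by
  ext x y
  simp only [margAB, Matrix.sum_apply, Matrix.smul_apply, Finset.smul_sum]
  exact Finset.sum_comm

lemma margAC_sum_smul [Fintype B] {ι : Type*} [Fintype ι] (p : ι → ℝ)
    (ρ : ι → Matrix (A × B × C) (A × B × C) ℂ) :
    margAC (∑ k, p k • ρ k) = ∑ k, p k • margAC (ρ k) := by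
  ext x y
  simp only [margAC, Matrix.sum_apply, Matrix.smul_apply, Finset.smul_sum]
  exact Finset.sum_comm

end Marginals

theorem Ta_eq_zero_of_mix_general {A B C : Type*}
    [Fintype A] [Fintype B] [Fintype C]
    [DecidableEq A] [DecidableEq B] [DecidableEq C]
    (K : ℕ) (p : Fin K → ℝ) (ρs : Fin K → Matrix (A × B × C) (A × B × C) ℂ)
    (hs : ∀ k, IsState (ρs k)) (hT : ∀ k, Ta (ρs k) = 0)
    (horthB : ∀ k k', k ≠ k' → margB (ρs k) * margB (ρs k') = 0)
    (horthC : ∀ k k', k ≠ k' → margC (ρs k) * margC (ρs k') = 0) :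
    Ta (∑ k, p k • ρs k) = 0 := by
  have hAB k : (margAB (ρs k)).PosSemidef := posSemidef_margAB (hs k).1
  have hAC k : (margAC (ρs k)).PosSemidef := posSemidef_margAC (hs k).1
  have horthAB : Pairwise fun k k' => margAB (ρs k) * margAB (ρs k') = 0 := fun k k' hkk' =>
    (hAB k).mul_eq_zero_of_ptraceLeft_mul_eq_zero (hAB k') (horthB k k' hkk')
  have horthAC : Pairwise fun k k' => margAC (ρs k) * margAC (ρs k') = 0 := fun k k' hkk' =>
    (hAC k).mul_eq_zero_of_ptraceLeft_mul_eq_zero (hAC k') (horthC k k' hkk')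
  simp only [Ta, margB_eq_ptraceLeft_margAB, margC_eq_ptraceLeft_margAC] at hT horthB horthC ⊢
  rw [margAB_sum_smul, margAC_sum_smul, ptraceLeft_sum_smul, ptraceLeft_sum_smul,
    entropy_sum_smul_of_pairwise_mul_eq_zero (fun k => (hAB k).1) horthAB,
    entropy_sum_smul_of_pairwise_mul_eq_zero (fun k => (hAC k).1) horthAC,
    entropy_sum_smul_of_pairwise_mul_eq_zero (fun k => (posSemidef_ptraceLeft (hAB k)).1)
      horthB,
    entropy_sum_smul_of_pairwise_mul_eq_zero (fun k => (posSemidef_ptraceLeft (hAC k)).1)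
      horthC]
  simp only [trace_ptraceLeft, ← Finset.sum_add_distrib, ← Finset.sum_sub_distrib]
  refine Finset.sum_eq_zero fun k _ => ?_
  linear_combination p k * hT k

/-- an ensemble `{pₖ, ρᵏ_ABC}` of states with `T^(a)(ρᵏ_ABC) = 0`
for all `k`, whose `B`-marginals are mutually orthogonal and whose
`C`-marginals are mutually orthogonal, generates a state
`ρ_ABC = ∑ₖ pₖ ρᵏ_ABC` with `T^(a)(ρ_ABC) = 0`. -/
theorem Ta_eq_zero_of_mix {A B C : Type*}
    [Fintype A] [Fintype B] [Fintype C]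
    [DecidableEq A] [DecidableEq B] [DecidableEq C]
    (K : ℕ) (p : Fin K → ℝ) (ρs : Fin K → Matrix (A × B × C) (A × B × C) ℂ)
    (hp : ∀ k, 0 ≤ p k) (hp1 : ∑ k, p k = 1)
    (hs : ∀ k, IsState (ρs k)) (hT : ∀ k, Ta (ρs k) = 0)
    (horthB : ∀ k k', k ≠ k' → margB (ρs k) * margB (ρs k') = 0)
    (horthC : ∀ k k', k ≠ k' → margC (ρs k) * margC (ρs k') = 0) :
    Ta (∑ k, p k • ρs k) = 0 :=
  Ta_eq_zero_of_mix_general K p ρs hs hT horthB horthC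

end
end

section
/- (Koashi–Winter inequality) For every state ρ_ABC on H_A ⊗ H_B ⊗ H_C, E(ρ_AB) ≤ D^(C)(ρ_AC) + S_{ρ_AC}(A|C). -/
open Matrix Kronecker
open scoped Classical ComplexOrder

noncomputable section

/-!
Discord plus conditional entropy equals `S(ρ_A) − J^(C)(ρ_AC)`, so the claim is that every
von Neumann measurement `{|vᵢ⟩}` on `C` satisfies `E(ρ_AB) ≤ ∑ᵢ pᵢ S(ρ_{A|i})`. Measuring `C`
on `ρ_ABC` splits `ρ_AB = ∑ᵢ τᵢ` with `tr_B τᵢ = pᵢ ρ_{A|i}`. Decomposing each `τᵢ` spectrally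
into pure states gives an ensemble for `ρ_AB` whose average entanglement is at most
`∑ᵢ pᵢ S(ρ_{A|i})` by concavity of the von Neumann entropy, which in turn follows from Schur
concavity and Jensen's inequality for `η(x) = −x log x`.
-/

open Real

section Entropy

variable {n : Type*} [Fintype n] [DecidableEq n]

lemma entropy_eq_sum_negMulLog {ρ : Matrix n n ℂ} (h : ρ.IsHermitian) :
    entropy ρ = ∑ i, negMulLog (h.eigenvalues i) := by
  simp [entropy, h, negMulLog, Finset.sum_neg_distrib]

lemma IsState.sum_eigenvalues {ρ : Matrix n n ℂ} (hρ : IsState ρ) :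
    ∑ i, hρ.1.1.eigenvalues i = 1 := by
  have h := hρ.1.1.trace_eq_sum_eigenvalues.symm.trans hρ.2
  simpa using congrArg Complex.re h

lemma IsState.entropy_nonneg {ρ : Matrix n n ℂ} (hρ : IsState ρ) : 0 ≤ entropy ρ := by
  rw [entropy_eq_sum_negMulLog hρ.1.1]
  refine Finset.sum_nonneg fun i _ => negMulLog_nonneg (hρ.1.eigenvalues_nonneg i) ?_
  rw [← hρ.sum_eigenvalues]
  exact Finset.single_le_sum (fun j _ => hρ.1.eigenvalues_nonneg j) (Finset.mem_univ i)

end Entropy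

section Concavity

variable {n : Type*} [Fintype n] [DecidableEq n]

lemma sum_normSq_row_of_mem_unitaryGroup {W : Matrix n n ℂ} (hW : W ∈ unitaryGroup n ℂ)
    (m : n) : ∑ j, Complex.normSq (W m j) = 1 := by
  have h := congrFun (congrFun (mem_unitaryGroup_iff.mp hW) m) m
  simp only [mul_apply, star_apply, one_apply_eq, Complex.star_def, Complex.mul_conj] at h
  exact_mod_cast h

lemma sum_normSq_col_of_mem_unitaryGroup {W : Matrix n n ℂ} (hW : W ∈ unitaryGroup n ℂ)
    (j : n) : ∑ m, Complex.normSq (W m j) = 1 := by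
  have h := congrFun (congrFun (mem_unitaryGroup_iff'.mp hW) j) j
  simp only [mul_apply, star_apply, one_apply_eq, Complex.star_def, mul_comm _ (W _ j),
    Complex.mul_conj] at h
  exact_mod_cast h

lemma re_mul_diagonal_mul_star_apply_self (W : Matrix n n ℂ) (μ : n → ℝ) (m : n) :
    ((W * diagonal (fun j => (μ j : ℂ)) * star W) m m).re
      = ∑ j, Complex.normSq (W m j) * μ j := by
  rw [mul_apply, Complex.re_sum]
  simp only [mul_diagonal, star_apply, Complex.star_def]
  refine Finset.sum_congr rfl fun j _ => ?_
  rw [mul_right_comm, Complex.mul_conj, ← Complex.ofReal_mul, Complex.ofReal_re]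

lemma sum_mul_negMulLog_le_negMulLog_sum {ι : Type*} [Fintype ι] {w x : ι → ℝ}
    (hw : ∀ i, 0 ≤ w i) (hw1 : ∑ i, w i = 1) (hx : ∀ i, 0 ≤ x i) :
    ∑ i, w i * negMulLog (x i) ≤ negMulLog (∑ i, w i * x i) := by
  simpa only [smul_eq_mul] using
    concaveOn_negMulLog.le_map_sum (fun i _ => hw i) hw1 (fun i _ => hx i)

/-- Schur concavity: the diagonal of `ρ` in any orthonormal basis is majorized by its
spectrum. -/
lemma entropy_le_sum_negMulLog_diag {ρ : Matrix n n ℂ} (hρ : ρ.PosSemidef) {V : Matrix n n ℂ}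
    (hV : V ∈ unitaryGroup n ℂ) :
    entropy ρ ≤ ∑ m, negMulLog ((star V * ρ * V) m m).re := by
  set μ := hρ.1.eigenvalues
  set W := star V * (hρ.1.eigenvectorUnitary : Matrix n n ℂ)
  have hW : W ∈ unitaryGroup n ℂ := mul_mem (Unitary.star_mem hV) hρ.1.eigenvectorUnitary.2
  have hconj : star V * ρ * V = W * diagonal (fun j => (μ j : ℂ)) * star W := by
    conv_lhs => rw [hρ.1.spectral_theorem, Unitary.conjStarAlgAut_apply]
    simp only [W, star_mul, star_star, mul_assoc]
    rfl
  calc entropy ρ = ∑ j, negMulLog (μ j) := entropy_eq_sum_negMulLog hρ.1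
    _ = ∑ m, ∑ j, Complex.normSq (W m j) * negMulLog (μ j) := by
        rw [Finset.sum_comm]
        simp_rw [← Finset.sum_mul, sum_normSq_col_of_mem_unitaryGroup hW, one_mul]
    _ ≤ ∑ m, negMulLog (∑ j, Complex.normSq (W m j) * μ j) :=
        Finset.sum_le_sum fun m _ => sum_mul_negMulLog_le_negMulLog_sum
          (fun j => Complex.normSq_nonneg _) (sum_normSq_row_of_mem_unitaryGroup hW m)
          hρ.eigenvalues_nonneg
    _ = ∑ m, negMulLog ((star V * ρ * V) m m).re := by
        simp_rw [hconj, re_mul_diagonal_mul_star_apply_self]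

lemma sum_mul_entropy_le_entropy_sum {ι : Type*} [Fintype ι] {w : ι → ℝ}
    {σ : ι → Matrix n n ℂ} (hw : ∀ i, 0 ≤ w i) (hw1 : ∑ i, w i = 1)
    (hσ : ∀ i, (σ i).PosSemidef) :
    ∑ i, w i * entropy (σ i) ≤ entropy (∑ i, w i • σ i) := by
  set ρ := ∑ i, w i • σ i
  have hρ : ρ.IsHermitian := (posSemidef_sum _ fun i _ => (hσ i).smul (hw i)).1
  set U : Matrix n n ℂ := (hρ.eigenvectorUnitary : Matrix n n ℂ)
  set e : ι → n → ℝ := fun i m => ((star U * σ i * U) m m).re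
  have he : ∀ i m, 0 ≤ e i m := fun i m => by
    have h := ((hσ i).conjTranspose_mul_mul_same U).diag_nonneg (i := m)
    rw [← star_eq_conjTranspose] at h
    exact (Complex.nonneg_iff.mp h).1
  have hdiag : ∀ m, hρ.eigenvalues m = ∑ i, w i * e i m := by
    intro m
    have h := congrFun (congrFun hρ.conjStarAlgAut_star_eigenvectorUnitary m) m
    rw [Unitary.conjStarAlgAut_star_apply] at h
    simp only [ρ, Finset.mul_sum, Finset.sum_mul, mul_smul_comm, smul_mul_assoc, Matrix.sum_apply,
      Matrix.smul_apply, diagonal_apply_eq, Function.comp_apply] at h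
    have h' := congrArg Complex.re h
    simp only [Complex.re_sum, Complex.real_smul, Complex.re_ofReal_mul] at h'
    simpa [e, U] using h'.symm
  calc ∑ i, w i * entropy (σ i) ≤ ∑ i, w i * ∑ m, negMulLog (e i m) := by
        gcongr with i
        · exact hw i
        · exact entropy_le_sum_negMulLog_diag (hσ i) hρ.eigenvectorUnitary.2
    _ = ∑ m, ∑ i, w i * negMulLog (e i m) := by
        simp_rw [Finset.mul_sum]
        exact Finset.sum_comm
    _ ≤ ∑ m, negMulLog (∑ i, w i * e i m) :=
        Finset.sum_le_sum fun m _ =>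
          sum_mul_negMulLog_le_negMulLog_sum hw hw1 fun i => he i m
    _ = entropy ρ := by
        simp_rw [← hdiag]
        exact (entropy_eq_sum_negMulLog hρ).symm

lemma sum_mul_entropy_le {ι : Type*} [Fintype ι] {w : ι → ℝ} {σ : ι → Matrix n n ℂ}
    (hw : ∀ i, 0 ≤ w i) (hσ : ∀ i, (σ i).PosSemidef) :
    ∑ i, w i * entropy (σ i) ≤ (∑ i, w i) * entropy ((∑ i, w i)⁻¹ • ∑ i, w i • σ i) := by
  set t := ∑ i, w i
  rcases (Finset.sum_nonneg fun i _ => hw i : 0 ≤ t).eq_or_lt with ht | ht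
  · have hw0 : ∀ i, w i = 0 := fun i =>
      (Finset.sum_eq_zero_iff_of_nonneg fun i _ => hw i).mp ht.symm i (Finset.mem_univ i)
    simp [t, hw0]
  · have h := sum_mul_entropy_le_entropy_sum (w := fun i => w i / t)
      (fun i => div_nonneg (hw i) ht.le) (by rw [← Finset.sum_div, div_self ht.ne']) hσ
    simp only [div_eq_inv_mul, mul_smul, ← Finset.smul_sum, mul_assoc, ← Finset.mul_sum] at h
    calc ∑ i, w i * entropy (σ i) = t * (t⁻¹ * ∑ i, w i * entropy (σ i)) := by
          rw [← mul_assoc, mul_inv_cancel₀ ht.ne', one_mul]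
      _ ≤ t * entropy (t⁻¹ • ∑ i, w i • σ i) := by gcongr

end Concavity

section PureStates

variable {n : Type*} [Fintype n]

lemma isState_pureSt {ψ : n → ℂ} (hψ : UnitVec ψ) : IsState (pureSt ψ) := by
  refine ⟨posSemidef_vecMulVec_self_star ψ, ?_⟩
  simp only [trace, diag, pureSt, vecMulVec_apply, Pi.star_apply, Complex.star_def,
    Complex.mul_conj]
  exact_mod_cast hψ

variable [DecidableEq n]

lemma unitVec_eigenvectorBasis {ρ : Matrix n n ℂ} (h : ρ.IsHermitian) (k : n) :
    UnitVec (h.eigenvectorBasis k) := by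
  have hk := h.eigenvectorBasis.orthonormal.1 k
  rw [EuclideanSpace.norm_eq, Real.sqrt_eq_one] at hk
  simpa [UnitVec, Complex.normSq_eq_norm_sq] using hk

lemma Matrix.IsHermitian.eq_sum_eigenvalues_smul_pureSt {ρ : Matrix n n ℂ}
    (h : ρ.IsHermitian) : ρ = ∑ k, h.eigenvalues k • pureSt (h.eigenvectorBasis k) := by
  conv_lhs => rw [h.spectral_theorem, Unitary.conjStarAlgAut_apply]
  ext x y
  rw [mul_apply]
  simp only [mul_diagonal, pureSt, vecMulVec_apply, Matrix.sum_apply, smul_apply,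
    Complex.real_smul, eigenvectorUnitary_apply, Complex.coe_algebraMap, Function.comp_apply,
    star_apply, RCLike.star_def, Pi.star_apply]
  exact Finset.sum_congr rfl fun k _ => by ring

end PureStates

section PartialTrace

variable {X Y : Type*} [Fintype Y]

lemma ptraceRight_smul (r : ℝ) (σ : Matrix (X × Y) (X × Y) ℂ) :
    ptraceRight (r • σ) = r • ptraceRight σ := by
  ext x x'
  simp [ptraceRight, Finset.smul_sum]

lemma ptraceRight_sum {ι : Type*} [Fintype ι] (σ : ι → Matrix (X × Y) (X × Y) ℂ) :
    ptraceRight (∑ i, σ i) = ∑ i, ptraceRight (σ i) := by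
  ext x x'
  simp only [ptraceRight, Matrix.sum_apply]
  exact Finset.sum_comm

lemma trace_ptraceRight [Fintype X] (σ : Matrix (X × Y) (X × Y) ℂ) :
    (ptraceRight σ).trace = σ.trace := by
  simp [trace, ptraceRight, Fintype.sum_prod_type]

end PartialTrace

section Measurement

variable {X Y : Type*} [Fintype X] [DecidableEq X]

variable (X) in
/-- The isometry `1 ⊗ |u⟩ : H_X → H_X ⊗ H_Y`. -/
def tensorKet (u : Y → ℂ) : Matrix (X × Y) X ℂ :=
  fun q x => if q.1 = x then u q.2 else 0

lemma kronecker_one_pureSt (u : Y → ℂ) :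
    (1 : Matrix X X ℂ) ⊗ₖ pureSt u = tensorKet X u * (tensorKet X u)ᴴ := by
  ext ⟨x, y⟩ ⟨x', y'⟩
  simp [kroneckerMap_apply, one_apply, pureSt, vecMulVec_apply, tensorKet, mul_apply,
    conjTranspose_apply, apply_ite star]

variable [Fintype Y]

/-- `(1 ⊗ ⟨u|) σ (1 ⊗ |u⟩)`: the unnormalized state left on `X` when the outcome `|u⟩` is
found on `Y`. -/
def compress (σ : Matrix (X × Y) (X × Y) ℂ) (u : Y → ℂ) : Matrix X X ℂ :=
  (tensorKet X u)ᴴ * σ * tensorKet X u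

lemma compress_apply (σ : Matrix (X × Y) (X × Y) ℂ) (u : Y → ℂ) (a a' : X) :
    compress σ u a a' = ∑ d : Y, ∑ d' : Y, star (u d) * σ (a, d) (a', d') * u d' := by
  simp only [compress, mul_apply, conjTranspose_apply, tensorKet, apply_ite star,
    RCLike.star_def, star_zero, ite_mul, zero_mul, Fintype.sum_prod_type, Finset.sum_ite_irrel,
    Finset.sum_const_zero, Finset.sum_ite_eq', Finset.mem_univ, ↓reduceIte, mul_ite,
    Finset.sum_mul, mul_zero]
  exact Finset.sum_comm

lemma Matrix.PosSemidef.compress {σ : Matrix (X × Y) (X × Y) ℂ} (hσ : σ.PosSemidef)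
    (u : Y → ℂ) : (compress σ u).PosSemidef :=
  hσ.conjTranspose_mul_mul_same (tensorKet X u)

lemma ptraceRight_tensorKet_mul_mul (u : Y → ℂ) (N : Matrix X X ℂ) :
    ptraceRight (tensorKet X u * N * (tensorKet X u)ᴴ) = (star u ⬝ᵥ u) • N := by
  ext x x'
  simp only [ptraceRight, mul_apply, tensorKet, ite_mul, zero_mul, Finset.sum_ite_eq,
    Finset.mem_univ, ↓reduceIte, conjTranspose_apply, apply_ite star, RCLike.star_def, star_zero,
    mul_ite, mul_zero, dotProduct, Pi.star_apply, Matrix.smul_apply, smul_eq_mul, Finset.sum_mul]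
  exact Finset.sum_congr rfl fun y _ => by ring

lemma measProb_eq_re_trace_compress (σ : Matrix (X × Y) (X × Y) ℂ) (u : Y → ℂ) :
    measProb σ u = (compress σ u).trace.re := by
  rw [measProb, compress, kronecker_one_pureSt, Matrix.mul_assoc, trace_mul_comm]

lemma postState_eq_smul_compress (σ : Matrix (X × Y) (X × Y) ℂ) {u : Y → ℂ}
    (hu : star u ⬝ᵥ u = 1) : postState σ u = (measProb σ u)⁻¹ • compress σ u := by
  have h : tensorKet X u * (tensorKet X u)ᴴ * σ * (tensorKet X u * (tensorKet X u)ᴴ)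
      = tensorKet X u * compress σ u * (tensorKet X u)ᴴ := by
    simp only [compress, Matrix.mul_assoc]
  rw [postState, kronecker_one_pureSt, h, ptraceRight_tensorKet_mul_mul, hu, one_smul]

end Measurement

section OrthonormalFamily

variable {Y : Type*} [Fintype Y] [DecidableEq Y]

/-- Orthonormal bases of `H_Y` in the form over which `classicalCorr` takes its supremum. -/
def IsONB (v : Y → Y → ℂ) : Prop :=
  ∀ i j, star (v i) ⬝ᵥ v j = if i = j then 1 else 0

/-- Completeness: the rows of a square matrix with orthonormal columns are orthonormal too. -/
lemma IsONB.sum_star_mul {v : Y → Y → ℂ} (hv : IsONB v) (d d' : Y) :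
    ∑ i, star (v i d) * v i d' = if d = d' then 1 else 0 := by
  set V : Matrix Y Y ℂ := Matrix.of fun d i => v i d
  have h : Vᴴ * V = 1 := by
    ext i j
    simpa [V, mul_apply, dotProduct, one_apply] using hv i j
  have h' : (V * Vᴴ) d' d = (1 : Matrix Y Y ℂ) d' d := by rw [mul_eq_one_comm.mp h]
  simpa [V, mul_apply, one_apply, mul_comm, eq_comm] using h'

lemma isONB_single : IsONB (fun i : Y => (Pi.single i 1 : Y → ℂ)) := by
  intro i j
  by_cases h : i = j <;> simp [dotProduct, Pi.single_apply, h, eq_comm]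

variable {X : Type*} [Fintype X]

lemma sum_compress_eq_ptraceRight [DecidableEq X] (σ : Matrix (X × Y) (X × Y) ℂ)
    {v : Y → Y → ℂ} (hv : IsONB v) : ∑ i, compress σ (v i) = ptraceRight σ := by
  ext a a'
  simp only [Matrix.sum_apply, compress_apply, ptraceRight]
  calc ∑ i, ∑ d, ∑ d', star (v i d) * σ (a, d) (a', d') * v i d'
      = ∑ d, ∑ d', (∑ i, star (v i d) * v i d') * σ (a, d) (a', d') := by
        rw [Finset.sum_comm]
        refine Finset.sum_congr rfl fun d _ => ?_
        rw [Finset.sum_comm]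
        refine Finset.sum_congr rfl fun d' _ => ?_
        rw [Finset.sum_mul]
        exact Finset.sum_congr rfl fun i _ => by ring
    _ = ∑ d, σ (a, d) (a', d) := by
        simp only [hv.sum_star_mul, ite_mul, one_mul, zero_mul, Finset.sum_ite_eq,
          Finset.mem_univ, if_true]

lemma Matrix.PosSemidef.ptraceRight {σ : Matrix (X × Y) (X × Y) ℂ} (hσ : σ.PosSemidef) :
    (ptraceRight σ).PosSemidef := by
  classical
  rw [← sum_compress_eq_ptraceRight σ isONB_single]
  exact posSemidef_sum _ fun i _ => hσ.compress _

lemma IsState.ptraceRight {σ : Matrix (X × Y) (X × Y) ℂ} (hσ : IsState σ) :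
    IsState (ptraceRight σ) :=
  ⟨hσ.1.ptraceRight, (trace_ptraceRight σ).trans hσ.2⟩

end OrthonormalFamily

section EntanglementOfFormation

variable {X Y : Type*} [Fintype X] [Fintype Y] [DecidableEq X]

lemma eof_le_of_eq_sum {ι : Type*} [Fintype ι] {ρ : Matrix (X × Y) (X × Y) ℂ} {p : ι → ℝ}
    {ψ : ι → X × Y → ℂ} (hp : ∀ i, 0 ≤ p i) (hψ : ∀ i, UnitVec (ψ i))
    (hρ : ρ = ∑ i, p i • pureSt (ψ i)) :
    eof ρ ≤ ∑ i, p i * entropy (ptraceRight (pureSt (ψ i))) := by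
  set e := (Fintype.equivFin ι).symm
  refine csInf_le ⟨0, ?_⟩ ⟨_, p ∘ e, ψ ∘ e, fun k => hp _, fun k => hψ _, ?_, ?_⟩
  · rintro _ ⟨K, q, φ, hq, hφ, -, rfl⟩
    exact Finset.sum_nonneg fun k _ =>
      mul_nonneg (hq k) (isState_pureSt (hφ k)).ptraceRight.entropy_nonneg
  · rw [hρ]
    exact (e.sum_comp _).symm
  · exact (e.sum_comp _).symm

/-- Refine each `τᵢ` spectrally into pure states, then use concavity of the entropy. -/
lemma eof_le_sum_of_eq_sum {ι : Type*} [Fintype ι] {ρ : Matrix (X × Y) (X × Y) ℂ}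
    {τ : ι → Matrix (X × Y) (X × Y) ℂ} (hτ : ∀ i, (τ i).PosSemidef) (hρ : ρ = ∑ i, τ i) :
    eof ρ ≤ ∑ i, (τ i).trace.re * entropy ((τ i).trace.re⁻¹ • ptraceRight (τ i)) := by
  classical
  set μ := fun i => (hτ i).1.eigenvalues
  set ψ := fun i k => ⇑((hτ i).1.eigenvectorBasis k)
  have hdecomp : ∀ i, τ i = ∑ k, μ i k • pureSt (ψ i k) :=
    fun i => (hτ i).1.eq_sum_eigenvalues_smul_pureSt
  have htrace : ∀ i, (τ i).trace.re = ∑ k, μ i k := fun i => by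
    simpa using congrArg Complex.re (hτ i).1.trace_eq_sum_eigenvalues
  have hmarg : ∀ i, ptraceRight (τ i) = ∑ k, μ i k • ptraceRight (pureSt (ψ i k)) := fun i => by
    conv_lhs => rw [hdecomp i]
    simp only [ptraceRight_sum, ptraceRight_smul]
  calc eof ρ ≤ ∑ x : ι × (X × Y), μ x.1 x.2 * entropy (ptraceRight (pureSt (ψ x.1 x.2))) :=
        eof_le_of_eq_sum (fun x => (hτ x.1).eigenvalues_nonneg x.2)
          (fun x => unitVec_eigenvectorBasis _ x.2)
          (by rw [hρ, Fintype.sum_prod_type]; exact Finset.sum_congr rfl fun i _ => hdecomp i)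
    _ = ∑ i, ∑ k, μ i k * entropy (ptraceRight (pureSt (ψ i k))) := Fintype.sum_prod_type _
    _ ≤ ∑ i, (∑ k, μ i k) *
          entropy ((∑ k, μ i k)⁻¹ • ∑ k, μ i k • ptraceRight (pureSt (ψ i k))) :=
        Finset.sum_le_sum fun i _ => sum_mul_entropy_le (hτ i).eigenvalues_nonneg
          fun k => (posSemidef_vecMulVec_self_star _).ptraceRight
    _ = ∑ i, (τ i).trace.re * entropy ((τ i).trace.re⁻¹ • ptraceRight (τ i)) := by
        simp only [htrace, hmarg]

end EntanglementOfFormation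

section Tripartite

variable {A B C : Type*} [Fintype A] [Fintype B] [Fintype C] [DecidableEq A]

lemma ptraceRight_compress_submatrix_prodAssoc (ρ : Matrix (A × B × C) (A × B × C) ℂ)
    (u : C → ℂ) :
    ptraceRight (compress (ρ.submatrix (Equiv.prodAssoc A B C) (Equiv.prodAssoc A B C)) u)
      = compress (margAC ρ) u := by
  ext a a'
  simp only [ptraceRight, compress_apply, margAC, submatrix_apply, Equiv.prodAssoc_apply,
    Finset.mul_sum, Finset.sum_mul]
  rw [Finset.sum_comm]
  refine Finset.sum_congr rfl fun d _ => ?_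
  exact Finset.sum_comm

variable [DecidableEq C]

/-- Measuring `C` in the basis `v` splits `ρ_AB` into the pieces `(1 ⊗ ⟨vᵢ|) ρ (1 ⊗ |vᵢ⟩)`,
whose `B`-marginals are the post-measurement states of `ρ_AC`. -/
lemma eof_margAB_le {ρ : Matrix (A × B × C) (A × B × C) ℂ} (hρ : ρ.PosSemidef)
    {v : C → C → ℂ} (hv : IsONB v) :
    eof (margAB ρ) ≤ ∑ i, measProb (margAC ρ) (v i) * entropy (postState (margAC ρ) (v i)) := by
  set ρ' := ρ.submatrix (Equiv.prodAssoc A B C) (Equiv.prodAssoc A B C)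
  have hsplit : margAB ρ = ∑ i, compress ρ' (v i) := (sum_compress_eq_ptraceRight ρ' hv).symm
  refine (eof_le_sum_of_eq_sum (fun i => (hρ.submatrix _).compress _) hsplit).trans_eq
    (Finset.sum_congr rfl fun i _ => ?_)
  have hp : (compress ρ' (v i)).trace.re = measProb (margAC ρ) (v i) := by
    rw [measProb_eq_re_trace_compress, ← ptraceRight_compress_submatrix_prodAssoc,
      trace_ptraceRight]
  have hu : star (v i) ⬝ᵥ v i = 1 := by simpa using hv i i
  rw [hp, ptraceRight_compress_submatrix_prodAssoc, postState_eq_smul_compress _ hu]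

end Tripartite

section Discord

variable {X Y : Type*} [Fintype X] [Fintype Y] [DecidableEq X] [DecidableEq Y]

lemma discord_add_condEnt (σ : Matrix (X × Y) (X × Y) ℂ) :
    discord σ + condEnt σ = entropy (ptraceRight σ) - classicalCorr σ := by
  rw [discord, condEnt, mutualInfo]
  ring

lemma classicalCorr_le_entropy_ptraceRight_sub {σ : Matrix (X × Y) (X × Y) ℂ} {e : ℝ}
    (h : ∀ v, IsONB v → e ≤ ∑ i, measProb σ (v i) * entropy (postState σ (v i))) :
    classicalCorr σ ≤ entropy (ptraceRight σ) - e := by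
  refine csSup_le ⟨_, _, isONB_single, rfl⟩ ?_
  rintro r ⟨v, hv, rfl⟩
  linarith [h v hv]

end Discord

theorem koashiWinter_general {A B C : Type*} [Fintype A] [Fintype B] [Fintype C]
    [DecidableEq A] [DecidableEq C]
    (ρ : Matrix (A × B × C) (A × B × C) ℂ) (hρ : IsState ρ) :
    eof (margAB ρ) ≤ discord (margAC ρ) + condEnt (margAC ρ) := by
  rw [discord_add_condEnt]
  have hJ := classicalCorr_le_entropy_ptraceRight_sub fun v hv => eof_margAB_le hρ.1 hv
  linarith

/-- Koashi–Winter inequality: for every state `ρ_ABC`,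
`E(ρ_AB) ≤ D^(C)(ρ_AC) + S_{ρ_AC}(A|C)`. -/
theorem koashiWinter {A B C : Type*} [Fintype A] [Fintype B] [Fintype C]
    [DecidableEq A] [DecidableEq B] [DecidableEq C]
    (ρ : Matrix (A × B × C) (A × B × C) ℂ) (hρ : IsState ρ) :
    eof (margAB ρ) ≤ discord (margAC ρ) + condEnt (margAC ρ) :=
  koashiWinter_general ρ hρ

end
end
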